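/- arXiv:1708.09556 — 6 statements merged into one kernel-verified Lean document; each statement's English description precedes it below -/
import Mathlib

section
/- Under the stated Schrödinger-evolution setup with θ-independent control, the trace of the quantum Fisher information matrix satisfies Tr J(θ,t) ≤ 4·c·t² for every θ ∈ ℝ^m and every t ≥ 0, where c = ‖Σ_{j=1}^m X_j²‖ is the operator norm of the operator Σ_{j=1}^m X_j². -/
open scoped ComplexConjugate


/-- Under the Schrödinger-evolution setup with a θ-independent
control term, the trace of the quantum Fisher information matrix satisfies
`Tr J(θ,t) ≤ 4 c t²` for every `θ ∈ ℝ^m` and `t ≥ 0`, where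
`c = ‖∑ j, X j ^ 2‖` is the operator norm of `∑ j, X j ^ 2`. -/
theorem trace_qfi_le_four_c_t_sq
    {E : Type*} [NormedAddCommGroup E] [InnerProductSpace ℂ E] [FiniteDimensional ℂ E]
    (m : ℕ) (X : Fin m → (E →L[ℂ] E)) (hX : ∀ j, IsSelfAdjoint (X j))
    (K : ℝ → (E →L[ℂ] E)) (hKcont : Continuous K) (hKsa : ∀ t, IsSelfAdjoint (K t))
    (q : (Fin m → ℝ) → ℝ → E) (dq : Fin m → (Fin m → ℝ) → ℝ → E) (q₀ : E)
    -- the state is a unit vector at all times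
    (hunit : ∀ θ t, ‖q θ t‖ = 1)
    -- the initial state is independent of θ
    (hinit : ∀ θ, q θ 0 = q₀)
    -- the Schrödinger equation i ∂ₜ q = (H_θ + K t) q
    (hSch : ∀ θ t, HasDerivAt (q θ)
      ((-Complex.I) • ((∑ j, (θ j : ℂ) • X j) + K t) (q θ t)) t)
    -- dq j is the partial derivative of q with respect to θ^j
    (hpartial : ∀ θ t j,
      HasDerivAt (fun s : ℝ => q (Function.update θ j s) t) (dq j θ t) (θ j))
    -- the differentiated Schrödinger equation i ∂ₜ (∂ⱼ q) = Xⱼ q + (H_θ + K t) (∂ⱼ q)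
    (hdSch : ∀ θ t j, HasDerivAt (dq j θ)
      ((-Complex.I) • ((X j) (q θ t)
        + ((∑ k, (θ k : ℂ) • X k) + K t) (dq j θ t))) t)
    (θ : Fin m → ℝ) (t : ℝ) (ht : 0 ≤ t) :
    -- Tr J(θ,t) ≤ 4 c t²  with  c = ‖∑ j, X j ∘ X j‖
    ∑ j, 4 * Complex.re ((inner ℂ (dq j θ t) (dq j θ t) : ℂ)
        - (inner ℂ (dq j θ t) (q θ t) : ℂ) * (inner ℂ (q θ t) (dq j θ t) : ℂ))
      ≤ 4 * ‖∑ j, (X j).comp (X j)‖ * t ^ 2 := by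
  classical
  set H : E →L[ℂ] E := ∑ k, (θ k : ℂ) • X k with hH
  set c : ℝ := ‖∑ j, (X j).comp (X j)‖ with hc
  have hc0 : 0 ≤ c := norm_nonneg _
  -- H is self-adjoint
  have hHsa : IsSelfAdjoint H := by
    rw [hH]
    unfold IsSelfAdjoint
    rw [star_sum]
    refine Finset.sum_congr rfl fun k _ => ?_
    rw [star_smul, (hX k).star_eq, Complex.star_def, Complex.conj_ofReal]
  -- for a self-adjoint operator, ⟪v, A v⟫ has zero imaginary part
  have him : ∀ (A : E →L[ℂ] E), IsSelfAdjoint A → ∀ v : E,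
      (inner ℂ v (A v) : ℂ).im = 0 := by
    intro A hA v
    have hs := hA.isSymmetric v v
    have : conj (inner ℂ v (A v) : ℂ) = (inner ℂ v (A v) : ℂ) := by
      rw [inner_conj_symm]
      simpa using hs
    exact Complex.conj_eq_iff_im.mp this
  -- F is the sum of squared norms of the partial derivatives
  set F : ℝ → ℝ := fun s => ∑ j, ‖dq j θ s‖ ^ 2 with hF
  have hFnn : ∀ s, 0 ≤ F s := fun s =>
    Finset.sum_nonneg fun j _ => sq_nonneg _
  -- initial condition : dq j θ 0 = 0
  have hdq0 : ∀ j, dq j θ 0 = 0 := by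
    intro j
    have h1 := hpartial θ 0 j
    have h2 : (fun s : ℝ => q (Function.update θ j s) 0) = fun _ => q₀ := by
      funext s; exact hinit _
    rw [h2] at h1
    exact h1.unique (hasDerivAt_const _ _)
  have hF0 : F 0 = 0 := by
    simp [hF, hdq0]
  -- derivative of F
  set G : ℝ → ℝ := fun s => ∑ j, 2 * (inner ℂ (dq j θ s) ((X j) (q θ s)) : ℂ).im with hG
  have hFd : ∀ s, HasDerivAt F (G s) s := by
    intro s
    refine HasDerivAt.fun_sum fun j _ => ?_
    have hd := hdSch θ s j
    have hinner := hd.inner ℂ hd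
    have hre : HasDerivAt (fun u => (inner ℂ (dq j θ u) (dq j θ u) : ℂ).re)
        ((inner ℂ (dq j θ s) ((-Complex.I) • ((X j) (q θ s)
          + (H + K s) (dq j θ s))) : ℂ)
         + (inner ℂ ((-Complex.I) • ((X j) (q θ s)
          + (H + K s) (dq j θ s))) (dq j θ s) : ℂ)).re s :=
      Complex.reCLM.hasFDerivAt.comp_hasDerivAt s hinner
    have heq : (fun u => ‖dq j θ u‖ ^ 2)
        = fun u => (inner ℂ (dq j θ u) (dq j θ u) : ℂ).re := by
      funext u
      exact (inner_self_eq_norm_sq (𝕜 := ℂ) _).symm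
    rw [heq]
    refine hre.congr_deriv ?_
    have h1 : (inner ℂ ((-Complex.I) • ((X j) (q θ s) + (H + K s) (dq j θ s)))
        (dq j θ s) : ℂ)
        = conj (inner ℂ (dq j θ s) ((-Complex.I) • ((X j) (q θ s)
          + (H + K s) (dq j θ s))) : ℂ) := (inner_conj_symm _ _).symm
    rw [h1]
    rw [Complex.add_re, Complex.conj_re]
    have h2 : (inner ℂ (dq j θ s) ((-Complex.I) • ((X j) (q θ s)
        + (H + K s) (dq j θ s))) : ℂ).re
        = (inner ℂ (dq j θ s) ((X j) (q θ s)) : ℂ).im := by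
      rw [inner_smul_right, inner_add_right]
      have h3 : (inner ℂ (dq j θ s) (H (dq j θ s) + (K s) (dq j θ s)) : ℂ).im = 0 := by
        have := him (H + K s) (hHsa.add (hKsa s)) (dq j θ s)
        simpa [ContinuousLinearMap.add_apply] using this
      simp [Complex.mul_re, h3]
    rw [h2]; ring
  -- each X j applied to the state is uniformly bounded through c
  have hWc : ∀ s, ∑ j, ‖(X j) (q θ s)‖ ^ 2 ≤ c := by
    intro s
    have hT : (inner ℂ (q θ s) ((∑ j, (X j).comp (X j)) (q θ s)) : ℂ)
        = ∑ j, (inner ℂ ((X j) (q θ s)) ((X j) (q θ s)) : ℂ) := by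
      rw [ContinuousLinearMap.sum_apply, inner_sum]
      refine Finset.sum_congr rfl fun j _ => ?_
      rw [ContinuousLinearMap.comp_apply]
      exact ((hX j).isSymmetric _ _).symm
    have h1 : ∑ j, ‖(X j) (q θ s)‖ ^ 2
        = (inner ℂ (q θ s) ((∑ j, (X j).comp (X j)) (q θ s)) : ℂ).re := by
      rw [hT, Complex.re_sum]
      exact Finset.sum_congr rfl fun j _ =>
        (inner_self_eq_norm_sq (𝕜 := ℂ) _).symm
    rw [h1]
    calc (inner ℂ (q θ s) ((∑ j, (X j).comp (X j)) (q θ s)) : ℂ).re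
        ≤ ‖(inner ℂ (q θ s) ((∑ j, (X j).comp (X j)) (q θ s)) : ℂ)‖ :=
          Complex.re_le_norm _
      _ ≤ ‖q θ s‖ * ‖(∑ j, (X j).comp (X j)) (q θ s)‖ := norm_inner_le_norm _ _
      _ ≤ ‖q θ s‖ * (‖∑ j, (X j).comp (X j)‖ * ‖q θ s‖) := by
          gcongr
          exact ContinuousLinearMap.le_opNorm _ _
      _ = c := by rw [hunit]; ring
  -- bound on G
  have hGb : ∀ s, G s ≤ 2 * Real.sqrt c * Real.sqrt (F s) := by
    intro s
    have hCS : (∑ j, ‖dq j θ s‖ * ‖(X j) (q θ s)‖)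
        ≤ Real.sqrt (F s) * Real.sqrt c := by
      have h1 : (∑ j, ‖dq j θ s‖ * ‖(X j) (q θ s)‖) ^ 2
          ≤ F s * (∑ j, ‖(X j) (q θ s)‖ ^ 2) :=
        Finset.sum_mul_sq_le_sq_mul_sq _ _ _
      have h2 : (∑ j, ‖dq j θ s‖ * ‖(X j) (q θ s)‖) ^ 2 ≤ F s * c :=
        h1.trans (by
          have := hWc s
          exact mul_le_mul_of_nonneg_left this (hFnn s))
      have h3 : (0:ℝ) ≤ ∑ j, ‖dq j θ s‖ * ‖(X j) (q θ s)‖ :=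
        Finset.sum_nonneg fun j _ => mul_nonneg (norm_nonneg _) (norm_nonneg _)
      calc (∑ j, ‖dq j θ s‖ * ‖(X j) (q θ s)‖)
          = Real.sqrt ((∑ j, ‖dq j θ s‖ * ‖(X j) (q θ s)‖) ^ 2) := by
            rw [Real.sqrt_sq h3]
        _ ≤ Real.sqrt (F s * c) := Real.sqrt_le_sqrt h2
        _ = Real.sqrt (F s) * Real.sqrt c := Real.sqrt_mul (hFnn s) _
    have hterm : ∀ j, 2 * (inner ℂ (dq j θ s) ((X j) (q θ s)) : ℂ).im
        ≤ 2 * (‖dq j θ s‖ * ‖(X j) (q θ s)‖) := by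
      intro j
      have := (Complex.im_le_norm (inner ℂ (dq j θ s) ((X j) (q θ s)) : ℂ)).trans
        (norm_inner_le_norm (𝕜 := ℂ) _ _)
      linarith
    calc G s ≤ ∑ j, 2 * (‖dq j θ s‖ * ‖(X j) (q θ s)‖) :=
          Finset.sum_le_sum fun j _ => hterm j
      _ = 2 * ∑ j, ‖dq j θ s‖ * ‖(X j) (q θ s)‖ := by
          rw [Finset.mul_sum]
      _ ≤ 2 * (Real.sqrt (F s) * Real.sqrt c) := by
          have := hCS; linarith
      _ = 2 * Real.sqrt c * Real.sqrt (F s) := by ring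
  -- Gronwall-type bound : F t ≤ c t²
  have hkey : F t ≤ c * t ^ 2 := by
    refine le_of_forall_pos_le_add fun δ hδ => ?_
    set ε : ℝ := δ / (2 * Real.sqrt c * t + 1) with hε
    have hden : 0 < 2 * Real.sqrt c * t + 1 := by positivity
    have hεpos : 0 < ε := div_pos hδ hden
    -- ψ s = sqrt (F s + ε²)
    set ψ : ℝ → ℝ := fun s => Real.sqrt (F s + ε ^ 2) with hψ
    have hFε : ∀ s, 0 < F s + ε ^ 2 := fun s => by
      have := hFnn s; positivity
    have hψd : ∀ s, HasDerivAt ψ (G s * (1 / (2 * Real.sqrt (F s + ε ^ 2)))) s := by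
      intro s
      have h1 : HasDerivAt (fun u => F u + ε ^ 2) (G s) s :=
        (hFd s).add_const _
      have h2 := (Real.hasDerivAt_sqrt (hFε s).ne').comp s h1
      exact (show HasDerivAt ψ _ s from h2).congr_deriv (by ring)
    -- φ s = √c s + ε − ψ s is monotone
    set φ : ℝ → ℝ := fun s => Real.sqrt c * s + ε - ψ s with hφdef
    have hφd : ∀ s, HasDerivAt φ
        (Real.sqrt c - G s * (1 / (2 * Real.sqrt (F s + ε ^ 2)))) s := by
      intro s
      exact (show HasDerivAt φ _ s from (((hasDerivAt_id s).const_mul (Real.sqrt c)).add_const ε).sub (hψd s)).congr_deriv (by ring)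
    have hφd0 : ∀ s, 0 ≤ Real.sqrt c - G s * (1 / (2 * Real.sqrt (F s + ε ^ 2))) := by
      intro s
      have hsq : 0 < Real.sqrt (F s + ε ^ 2) := Real.sqrt_pos.mpr (hFε s)
      have hle : G s ≤ 2 * Real.sqrt c * Real.sqrt (F s + ε ^ 2) := by
        refine (hGb s).trans ?_
        have hm : Real.sqrt (F s) ≤ Real.sqrt (F s + ε ^ 2) :=
          Real.sqrt_le_sqrt (by nlinarith [sq_nonneg ε])
        nlinarith [Real.sqrt_nonneg c]
      rw [sub_nonneg, mul_one_div, div_le_iff₀ (by positivity)]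
      linarith
    have hφmono : Monotone φ := monotone_of_deriv_nonneg
      (fun s => (hφd s).differentiableAt)
      (fun s => by rw [(hφd s).deriv]; exact hφd0 s)
    have hφ0 : φ 0 = 0 := by
      simp [hφdef, hψ, hF0, Real.sqrt_sq hεpos.le]
    have hφt : 0 ≤ φ t := hφ0 ▸ hφmono ht
    have hψt : ψ t ≤ Real.sqrt c * t + ε := by
      simp only [hφdef] at hφt; linarith
    have hFt : F t + ε ^ 2 ≤ (Real.sqrt c * t + ε) ^ 2 := by
      have h1 : Real.sqrt (F t + ε ^ 2) ≤ Real.sqrt c * t + ε := hψt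
      have h2 : 0 ≤ Real.sqrt c * t + ε := by positivity
      nlinarith [Real.sq_sqrt (hFε t).le, Real.sqrt_nonneg (F t + ε ^ 2)]
    have hsqc : Real.sqrt c ^ 2 = c := Real.sq_sqrt hc0
    have hεbound : ε * (2 * Real.sqrt c * t) ≤ δ := by
      rw [hε]
      rw [div_mul_eq_mul_div, div_le_iff₀ hden]
      nlinarith
    nlinarith
  -- conclude
  have hLHS : ∑ j, 4 * Complex.re ((inner ℂ (dq j θ t) (dq j θ t) : ℂ)
        - (inner ℂ (dq j θ t) (q θ t) : ℂ) * (inner ℂ (q θ t) (dq j θ t) : ℂ))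
      ≤ 4 * F t := by
    rw [hF, Finset.mul_sum]
    refine Finset.sum_le_sum fun j _ => ?_
    rw [Complex.sub_re]
    have h1 : (inner ℂ (dq j θ t) (dq j θ t) : ℂ).re = ‖dq j θ t‖ ^ 2 :=
      inner_self_eq_norm_sq (𝕜 := ℂ) _
    have h2 : 0 ≤ ((inner ℂ (dq j θ t) (q θ t) : ℂ)
        * (inner ℂ (q θ t) (dq j θ t) : ℂ)).re := by
      have hz : (inner ℂ (q θ t) (dq j θ t) : ℂ)
          = conj (inner ℂ (dq j θ t) (q θ t) : ℂ) := (inner_conj_symm _ _).symm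
      rw [hz, Complex.mul_conj]
      rw [Complex.ofReal_re]
      exact Complex.normSq_nonneg _
    rw [h1]; linarith
  calc ∑ j, 4 * Complex.re ((inner ℂ (dq j θ t) (dq j θ t) : ℂ)
        - (inner ℂ (dq j θ t) (q θ t) : ℂ) * (inner ℂ (q θ t) (dq j θ t) : ℂ))
      ≤ 4 * F t := hLHS
    _ ≤ 4 * (c * t ^ 2) := by linarith
    _ = 4 * c * t ^ 2 := by ring
end

section
/- Under the stated Schrödinger-evolution setup with θ-independent control, define F_j(t) = ⟨∂_j q(θ,t), (1 − |q(θ,t)⟩⟨q(θ,t)|) ∂_j q(θ,t)⟩. Then for each fixed θ and each j, the time derivative of F_j is dF_j/dt = 2 Im ⟨∂_j q(θ,t), (1 − |q(θ,t)⟩⟨q(θ,t)|) X_j q(θ,t)⟩; in particular all terms involving H_θ + K(t) cancel. -/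
/-- Under the Schrödinger-evolution setup with a θ-independent
control term, with `F_j(t) = ⟨∂ⱼq, (1 − |q⟩⟨q|) ∂ⱼq⟩`, the time derivative of
`F_j` is `dF_j/dt = 2 Im ⟨∂ⱼq, (1 − |q⟩⟨q|) Xⱼ q⟩`. -/
theorem hasDerivAt_F
    {E : Type*} [NormedAddCommGroup E] [InnerProductSpace ℂ E] [FiniteDimensional ℂ E]
    (m : ℕ) (X : Fin m → (E →L[ℂ] E)) (hX : ∀ j, IsSelfAdjoint (X j))
    (K : ℝ → (E →L[ℂ] E)) (hKcont : Continuous K) (hKsa : ∀ t, IsSelfAdjoint (K t))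
    (q : (Fin m → ℝ) → ℝ → E) (dq : Fin m → (Fin m → ℝ) → ℝ → E) (q₀ : E)
    (hunit : ∀ θ t, ‖q θ t‖ = 1)
    (hinit : ∀ θ, q θ 0 = q₀)
    (hSch : ∀ θ t, HasDerivAt (q θ)
      ((-Complex.I) • ((∑ j, (θ j : ℂ) • X j) + K t) (q θ t)) t)
    (hpartial : ∀ θ t j,
      HasDerivAt (fun s : ℝ => q (Function.update θ j s) t) (dq j θ t) (θ j))
    (hdSch : ∀ θ t j, HasDerivAt (dq j θ)
      ((-Complex.I) • ((X j) (q θ t)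
        + ((∑ k, (θ k : ℂ) • X k) + K t) (dq j θ t))) t)
    (θ : Fin m → ℝ) (j : Fin m) (t : ℝ) :
    HasDerivAt
      (fun s : ℝ => Complex.re ((inner ℂ (dq j θ s) (dq j θ s) : ℂ)
        - (inner ℂ (dq j θ s) (q θ s) : ℂ) * (inner ℂ (q θ s) (dq j θ s) : ℂ)))
      (2 * Complex.im ((inner ℂ (dq j θ t) ((X j) (q θ t)) : ℂ)
        - (inner ℂ (dq j θ t) (q θ t) : ℂ) * (inner ℂ (q θ t) ((X j) (q θ t)) : ℂ)))
      t := by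
  set A : E →L[ℂ] E := (∑ k, (θ k : ℂ) • X k) + K t with hAdef
  have hAsa : IsSelfAdjoint A := by
    refine IsSelfAdjoint.add ?_ (hKsa t)
    rw [IsSelfAdjoint, star_sum]
    refine Finset.sum_congr rfl fun k _ => ?_
    rw [star_smul, (hX k).star_eq, Complex.star_def, Complex.conj_ofReal]
  have hAsym : ∀ x y : E, (inner ℂ (A x) y : ℂ) = inner ℂ x (A y) := fun x y => hAsa.isSymmetric x y
  have hXsym : ∀ x y : E, (inner ℂ ((X j) x) y : ℂ) = inner ℂ x ((X j) y) :=
    fun x y => (hX j).isSymmetric x y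
  set p : E := q θ t with hp
  set d : E := dq j θ t with hd
  set p' : E := (-Complex.I) • A p with hp'
  set d' : E := (-Complex.I) • ((X j) p + A d) with hd'
  have hqd : HasDerivAt (q θ) p' t := hSch θ t
  have hdd : HasDerivAt (dq j θ) d' t := hdSch θ t j
  have h1 : HasDerivAt (fun s : ℝ => (inner ℂ (dq j θ s) (dq j θ s) : ℂ))
      ((inner ℂ d d' : ℂ) + (inner ℂ d' d : ℂ)) t := hdd.inner ℂ hdd
  have h2 : HasDerivAt (fun s : ℝ => (inner ℂ (dq j θ s) (q θ s) : ℂ))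
      ((inner ℂ d p' : ℂ) + (inner ℂ d' p : ℂ)) t := hdd.inner ℂ hqd
  have h3 : HasDerivAt (fun s : ℝ => (inner ℂ (q θ s) (dq j θ s) : ℂ))
      ((inner ℂ p d' : ℂ) + (inner ℂ p' d : ℂ)) t := hqd.inner ℂ hdd
  have hG : HasDerivAt
      (fun s : ℝ => (inner ℂ (dq j θ s) (dq j θ s) : ℂ)
        - (inner ℂ (dq j θ s) (q θ s) : ℂ) * (inner ℂ (q θ s) (dq j θ s) : ℂ))
      (((inner ℂ d d' : ℂ) + (inner ℂ d' d : ℂ))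
        - (((inner ℂ d p' : ℂ) + (inner ℂ d' p : ℂ)) * (inner ℂ p d : ℂ)
          + (inner ℂ d p : ℂ) * ((inner ℂ p d' : ℂ) + (inner ℂ p' d : ℂ)))) t :=
    h1.sub (h2.mul h3)
  have hRe := (Complex.reCLM.hasFDerivAt.comp_hasDerivAt t hG)
  refine hRe.congr_deriv ?_
  -- now pure algebra
  simp only [hp', hd', inner_smul_left, inner_smul_right, inner_add_left, inner_add_right,
    Complex.reCLM_apply, map_neg, Complex.conj_I]
  have e1 : (inner ℂ ((X j) p) d : ℂ) = starRingEnd ℂ (inner ℂ d ((X j) p) : ℂ) :=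
    (inner_conj_symm _ _).symm
  have e2 : (inner ℂ (A d) d : ℂ) = (inner ℂ d (A d) : ℂ) := hAsym d d
  have e3 : (inner ℂ (A d) p : ℂ) = (inner ℂ d (A p) : ℂ) := hAsym d p
  have e4 : (inner ℂ p ((X j) p) : ℂ) = starRingEnd ℂ (inner ℂ p ((X j) p) : ℂ) := by
    rw [inner_conj_symm]; exact (hXsym p p).symm
  have e9 : (inner ℂ ((X j) p) p : ℂ) = starRingEnd ℂ (inner ℂ p ((X j) p) : ℂ) :=
    (inner_conj_symm _ _).symm
  have e5 : (inner ℂ p (A d) : ℂ) = starRingEnd ℂ (inner ℂ d (A p) : ℂ) := by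
    rw [← hAsym p d, inner_conj_symm]
  have e6 : (inner ℂ d (A d) : ℂ) = starRingEnd ℂ (inner ℂ d (A d) : ℂ) := by
    rw [inner_conj_symm, ← hAsym d d]
  have e7 : (inner ℂ p d : ℂ) = starRingEnd ℂ (inner ℂ d p : ℂ) := (inner_conj_symm _ _).symm
  have e8 : (inner ℂ (A p) d : ℂ) = starRingEnd ℂ (inner ℂ d (A p) : ℂ) := (inner_conj_symm _ _).symm
  set a : ℂ := inner ℂ d ((X j) p)
  set b : ℂ := inner ℂ d (A d)
  set c : ℂ := inner ℂ p ((X j) p)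
  set e : ℂ := inner ℂ d (A p)
  set f : ℂ := inner ℂ d p
  rw [e1, e2, e3, e5, e8, e7, e9]
  have hb : b.im = 0 := by
    have := e6; rw [Complex.ext_iff] at this
    have := this.2; simp [Complex.conj_im] at this; linarith
  have hc : c.im = 0 := by
    have := e4; rw [Complex.ext_iff] at this
    have := this.2; simp [Complex.conj_im] at this; linarith
  simp only [Complex.sub_re, Complex.add_re, Complex.add_im, Complex.sub_im, Complex.mul_re,
    Complex.mul_im, Complex.neg_re, Complex.neg_im, Complex.I_re, Complex.I_im,
    Complex.conj_re, Complex.conj_im, hb, hc]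
  ring
end

section
/- Under the stated Schrödinger-evolution setup with θ-independent control, define F_j(t) = ⟨∂_j q(θ,t), (1 − |q(θ,t)⟩⟨q(θ,t)|) ∂_j q(θ,t)⟩ and G_j(t) = ⟨q(θ,t), X_j² q(θ,t)⟩. Then for each fixed θ and each j, dF_j/dt ≤ 2 (F_j(t) G_j(t))^{1/2} for all t ≥ 0. -/
open scoped ComplexConjugate

/-- Under the Schrödinger-evolution setup with a θ-independent
control term, with `F_j(t) = ⟨∂ⱼq, (1 − |q⟩⟨q|) ∂ⱼq⟩` and `G_j(t) = ⟨q, Xⱼ² q⟩`,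
one has `dF_j/dt ≤ 2 √(F_j G_j)` for all `t ≥ 0`. -/
theorem deriv_F_le_two_sqrt_F_G
    {E : Type*} [NormedAddCommGroup E] [InnerProductSpace ℂ E] [FiniteDimensional ℂ E]
    (m : ℕ) (X : Fin m → (E →L[ℂ] E)) (hX : ∀ j, IsSelfAdjoint (X j))
    (K : ℝ → (E →L[ℂ] E)) (hKcont : Continuous K) (hKsa : ∀ t, IsSelfAdjoint (K t))
    (q : (Fin m → ℝ) → ℝ → E) (dq : Fin m → (Fin m → ℝ) → ℝ → E) (q₀ : E)
    (hunit : ∀ θ t, ‖q θ t‖ = 1)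
    (hinit : ∀ θ, q θ 0 = q₀)
    (hSch : ∀ θ t, HasDerivAt (q θ)
      ((-Complex.I) • ((∑ j, (θ j : ℂ) • X j) + K t) (q θ t)) t)
    (hpartial : ∀ θ t j,
      HasDerivAt (fun s : ℝ => q (Function.update θ j s) t) (dq j θ t) (θ j))
    (hdSch : ∀ θ t j, HasDerivAt (dq j θ)
      ((-Complex.I) • ((X j) (q θ t)
        + ((∑ k, (θ k : ℂ) • X k) + K t) (dq j θ t))) t)
    (θ : Fin m → ℝ) (j : Fin m) (t : ℝ) (ht : 0 ≤ t) :
    deriv (fun s : ℝ => Complex.re ((inner ℂ (dq j θ s) (dq j θ s) : ℂ)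
        - (inner ℂ (dq j θ s) (q θ s) : ℂ) * (inner ℂ (q θ s) (dq j θ s) : ℂ))) t
      ≤ 2 * Real.sqrt
          ((Complex.re ((inner ℂ (dq j θ t) (dq j θ t) : ℂ)
            - (inner ℂ (dq j θ t) (q θ t) : ℂ) * (inner ℂ (q θ t) (dq j θ t) : ℂ)))
          * Complex.re (inner ℂ (q θ t) ((X j) ((X j) (q θ t))) : ℂ)) := by
  classical
  -- the full Hamiltonian at time t
  set A : E →L[ℂ] E := (∑ k, (θ k : ℂ) • X k) + K t with hAdef
  have hAsa : IsSelfAdjoint A := by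
    refine IsSelfAdjoint.add ?_ (hKsa t)
    rw [IsSelfAdjoint, star_sum]
    refine Finset.sum_congr rfl fun k _ => ?_
    rw [star_smul, (hX k).star_eq, Complex.star_def, Complex.conj_ofReal]
  have hAsym : ∀ x y : E, (inner ℂ (A x) y : ℂ) = inner ℂ x (A y) :=
    fun x y => (ContinuousLinearMap.isSelfAdjoint_iff_isSymmetric.mp hAsa) x y
  have hXsym : ∀ x y : E, (inner ℂ ((X j) x) y : ℂ) = inner ℂ x ((X j) y) :=
    fun x y => (ContinuousLinearMap.isSelfAdjoint_iff_isSymmetric.mp (hX j)) x y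
  -- abbreviations
  set u : ℝ → E := q θ with hu_def
  set v : ℝ → E := dq j θ with hv_def
  set u' : E := (-Complex.I) • A (u t) with hu'def
  set v' : E := (-Complex.I) • ((X j) (u t) + A (v t)) with hv'def
  have hu : HasDerivAt u u' t := hSch θ t
  have hv : HasDerivAt v v' t := hdSch θ t j
  -- derivative of F
  have h1 : HasDerivAt (fun s => (inner ℂ (v s) (v s) : ℂ))
      ((inner ℂ (v t) v' : ℂ) + inner ℂ v' (v t)) t := hv.inner ℂ hv
  have h2 : HasDerivAt (fun s => (inner ℂ (v s) (u s) : ℂ))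
      ((inner ℂ (v t) u' : ℂ) + inner ℂ v' (u t)) t := hv.inner ℂ hu
  have h3 : HasDerivAt (fun s => (inner ℂ (u s) (v s) : ℂ))
      ((inner ℂ (u t) v' : ℂ) + inner ℂ u' (v t)) t := hu.inner ℂ hv
  set D : ℂ := ((inner ℂ (v t) v' : ℂ) + inner ℂ v' (v t))
      - (((inner ℂ (v t) u' : ℂ) + inner ℂ v' (u t)) * inner ℂ (u t) (v t)
        + (inner ℂ (v t) (u t) : ℂ) * ((inner ℂ (u t) v' : ℂ) + inner ℂ u' (v t))) with hDdef
  have hF : HasDerivAt (fun s : ℝ => ((inner ℂ (v s) (v s) : ℂ)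
      - (inner ℂ (v s) (u s) : ℂ) * (inner ℂ (u s) (v s) : ℂ))) D t := h1.sub (h2.mul h3)
  have hFre : HasDerivAt (fun s : ℝ => Complex.re ((inner ℂ (v s) (v s) : ℂ)
      - (inner ℂ (v s) (u s) : ℂ) * (inner ℂ (u s) (v s) : ℂ))) D.re t :=
    (Complex.reCLM.hasFDerivAt.comp_hasDerivAt t hF)
  rw [hFre.deriv]
  -- the projected vector
  set w : E := v t - (inner ℂ (u t) (v t) : ℂ) • u t with hwdef
  set Xu : E := (X j) (u t) with hXudef
  -- the inner product ⟪u, X u⟫ is real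
  have hx_real : (starRingEnd ℂ) (inner ℂ (u t) Xu : ℂ) = inner ℂ (u t) Xu := by
    rw [inner_conj_symm, hXudef, hXsym]
  -- key identity: D.re = 2 * Im ⟪w, Xu⟫
  have hkey : D.re = 2 * (inner ℂ w Xu : ℂ).im := by
    have e1 : (inner ℂ (v t) v' : ℂ)
        = (-Complex.I) * ((inner ℂ (v t) Xu : ℂ) + inner ℂ (v t) (A (v t))) := by
      rw [hv'def, inner_smul_right, inner_add_right]
    have e2 : (inner ℂ v' (v t) : ℂ)
        = Complex.I * ((starRingEnd ℂ) (inner ℂ (v t) Xu : ℂ) + inner ℂ (v t) (A (v t))) := by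
      rw [hv'def, inner_smul_left, inner_add_left]
      rw [show (inner ℂ Xu (v t) : ℂ) = (starRingEnd ℂ) (inner ℂ (v t) Xu : ℂ) by
        rw [inner_conj_symm]]
      rw [hAsym]
      simp [Complex.ext_iff]
    have e3 : (inner ℂ (v t) u' : ℂ)
        = (-Complex.I) * (starRingEnd ℂ) (inner ℂ (u t) (A (v t)) : ℂ) := by
      rw [hu'def, inner_smul_right]
      rw [show (inner ℂ (v t) (A (u t)) : ℂ) = (starRingEnd ℂ) (inner ℂ (A (u t)) (v t) : ℂ) by
        rw [inner_conj_symm]]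
      rw [hAsym]
    have e4 : (inner ℂ v' (u t) : ℂ)
        = Complex.I * ((inner ℂ (u t) Xu : ℂ) + (starRingEnd ℂ) (inner ℂ (u t) (A (v t)) : ℂ)) := by
      rw [hv'def, inner_smul_left, inner_add_left]
      rw [show (inner ℂ Xu (u t) : ℂ) = (starRingEnd ℂ) (inner ℂ (u t) Xu : ℂ) by
        rw [inner_conj_symm]]
      rw [hx_real]
      rw [show (inner ℂ (A (v t)) (u t) : ℂ) = (starRingEnd ℂ) (inner ℂ (u t) (A (v t)) : ℂ) by
        rw [inner_conj_symm]]
      simp [Complex.ext_iff]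
    have e5 : (inner ℂ (u t) v' : ℂ)
        = (-Complex.I) * ((inner ℂ (u t) Xu : ℂ) + inner ℂ (u t) (A (v t))) := by
      rw [hv'def, inner_smul_right, inner_add_right]
    have e6 : (inner ℂ u' (v t) : ℂ)
        = Complex.I * (inner ℂ (u t) (A (v t)) : ℂ) := by
      rw [hu'def, inner_smul_left, hAsym]
      simp [Complex.ext_iff]
    have e7 : (inner ℂ (v t) (u t) : ℂ) = (starRingEnd ℂ) (inner ℂ (u t) (v t) : ℂ) := by
      rw [inner_conj_symm]
    have e8 : (inner ℂ w Xu : ℂ)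
        = (inner ℂ (v t) Xu : ℂ)
          - (starRingEnd ℂ) (inner ℂ (u t) (v t) : ℂ) * (inner ℂ (u t) Xu : ℂ) := by
      rw [hwdef, inner_sub_left, inner_smul_left]
    rw [hDdef, e1, e2, e3, e4, e5, e6, e7, e8]
    set a : ℂ := (inner ℂ (v t) Xu : ℂ)
    set p : ℂ := (inner ℂ (v t) (A (v t)) : ℂ)
    set r : ℂ := (inner ℂ (u t) (A (v t)) : ℂ)
    set c : ℂ := (inner ℂ (u t) (v t) : ℂ)
    set x : ℂ := (inner ℂ (u t) Xu : ℂ)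
    have hx : x.im = 0 := by
      have h := congrArg Complex.im hx_real
      simp only [Complex.conj_im] at h
      linarith
    simp only [Complex.sub_re, Complex.add_re, Complex.mul_re, Complex.mul_im,
      Complex.neg_re, Complex.neg_im, Complex.I_re, Complex.I_im,
      Complex.add_im, Complex.sub_im, Complex.conj_re, Complex.conj_im]
    ring_nf
    rw [hx]
    ring
  rw [hkey]
  -- F = ‖w‖², G = ‖Xu‖²
  have hu_norm : (inner ℂ (u t) (u t) : ℂ) = 1 := by
    rw [inner_self_eq_norm_sq_to_K, hunit]
    norm_num
  have hFnorm : Complex.re ((inner ℂ (v t) (v t) : ℂ)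
      - (inner ℂ (v t) (u t) : ℂ) * (inner ℂ (u t) (v t) : ℂ)) = ‖w‖ ^ 2 := by
    have : (inner ℂ w w : ℂ) = (inner ℂ (v t) (v t) : ℂ)
        - (inner ℂ (v t) (u t) : ℂ) * (inner ℂ (u t) (v t) : ℂ) := by
      rw [hwdef]
      simp only [inner_sub_left, inner_sub_right, inner_smul_left, inner_smul_right,
        hu_norm, mul_one]
      rw [show (inner ℂ (v t) (u t) : ℂ) = (starRingEnd ℂ) (inner ℂ (u t) (v t) : ℂ) by
        rw [inner_conj_symm]]
      ring
    rw [← this]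
    simpa using inner_self_eq_norm_sq (𝕜 := ℂ) w
  have hGnorm : Complex.re (inner ℂ (u t) ((X j) Xu) : ℂ) = ‖Xu‖ ^ 2 := by
    rw [← hXsym, ← hXudef]
    simpa using inner_self_eq_norm_sq (𝕜 := ℂ) Xu
  rw [hFnorm, hGnorm]
  -- Cauchy-Schwarz
  have hCS : (inner ℂ w Xu : ℂ).im ≤ ‖w‖ * ‖Xu‖ :=
    le_trans (Complex.im_le_norm _)
      (by exact norm_inner_le_norm w Xu)
  have hsqrt : Real.sqrt (‖w‖ ^ 2 * ‖Xu‖ ^ 2) = ‖w‖ * ‖Xu‖ := by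
    rw [← mul_pow, Real.sqrt_sq (by positivity)]
  rw [hsqrt]
  linarith
end

section
/- Under the stated Schrödinger-evolution setup with θ-independent control, assume in addition that the Hamiltonian model is spherical, i.e. Σ_{j=1}^m X_j² = (m/d)·I where d = dim E. Then the quantum Fisher information matrix satisfies Tr J(θ,t) ≤ (4m/d)·t² for every θ ∈ ℝ^m and every t ≥ 0. -/
open scoped ComplexConjugate Topology
open Filter

/-- Under the Schrödinger-evolution setup with a θ-independent
control term, if the Hamiltonian model is spherical, i.e.
`∑ j, Xⱼ² = (m/d) • 1` with `d = dim E`, then `Tr J(θ,t) ≤ (4m/d) t²` for all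
`θ ∈ ℝ^m` and `t ≥ 0`. -/
theorem trace_qfi_le_of_spherical
    {E : Type*} [NormedAddCommGroup E] [InnerProductSpace ℂ E] [FiniteDimensional ℂ E]
    (m : ℕ) (X : Fin m → (E →L[ℂ] E)) (hX : ∀ j, IsSelfAdjoint (X j))
    (K : ℝ → (E →L[ℂ] E)) (hKcont : Continuous K) (hKsa : ∀ t, IsSelfAdjoint (K t))
    (q : (Fin m → ℝ) → ℝ → E) (dq : Fin m → (Fin m → ℝ) → ℝ → E) (q₀ : E)
    (hunit : ∀ θ t, ‖q θ t‖ = 1)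
    (hinit : ∀ θ, q θ 0 = q₀)
    (hSch : ∀ θ t, HasDerivAt (q θ)
      ((-Complex.I) • ((∑ j, (θ j : ℂ) • X j) + K t) (q θ t)) t)
    (hpartial : ∀ θ t j,
      HasDerivAt (fun s : ℝ => q (Function.update θ j s) t) (dq j θ t) (θ j))
    (hdSch : ∀ θ t j, HasDerivAt (dq j θ)
      ((-Complex.I) • ((X j) (q θ t)
        + ((∑ k, (θ k : ℂ) • X k) + K t) (dq j θ t))) t)
    -- the spherical condition  ∑ j, Xⱼ² = (m/d) • 1  with  d = dim E
    (hsph : ∑ j, (X j).comp (X j)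
      = (((m : ℂ) / (Module.finrank ℂ E : ℂ))) • (1 : E →L[ℂ] E))
    (θ : Fin m → ℝ) (t : ℝ) (ht : 0 ≤ t) :
    ∑ j, 4 * Complex.re ((inner ℂ (dq j θ t) (dq j θ t) : ℂ)
        - (inner ℂ (dq j θ t) (q θ t) : ℂ) * (inner ℂ (q θ t) (dq j θ t) : ℂ))
      ≤ 4 * m / (Module.finrank ℂ E) * t ^ 2 := by
  classical
  set d : ℕ := Module.finrank ℂ E with hd
  -- initial condition for the derivatives
  have hψ0 : ∀ j, dq j θ 0 = 0 := by
    intro j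
    have h1 := hpartial θ 0 j
    have h2 : (fun s : ℝ => q (Function.update θ j s) 0) = fun _ => q₀ :=
      funext fun s => hinit _
    rw [h2] at h1
    exact ((hasDerivAt_const (θ j) q₀).unique h1).symm
  -- self-adjointness of the total Hamiltonian
  have hHsa : ∀ s : ℝ, IsSelfAdjoint ((∑ k, ((θ k : ℂ)) • X k) + K s) := by
    intro s
    have h1 : IsSelfAdjoint (∑ k, ((θ k : ℂ)) • X k) := by
      rw [IsSelfAdjoint, star_sum]
      refine Finset.sum_congr rfl fun k _ => ?_
      rw [star_smul, Complex.star_def, Complex.conj_ofReal, (hX k).star_eq]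
    exact h1.add (hKsa s)
  -- for a self-adjoint operator, ⟪v, A v⟫ has zero imaginary part
  have him : ∀ (A : E →L[ℂ] E), IsSelfAdjoint A → ∀ v : E,
      (inner ℂ v (A v) : ℂ).im = 0 := by
    intro A hA v
    have hadj : ContinuousLinearMap.adjoint A = A := by
      rw [← ContinuousLinearMap.star_eq_adjoint]; exact hA
    have h1 : (inner ℂ v (A v) : ℂ) = conj (inner ℂ v (A v) : ℂ) := by
      conv_lhs => rw [← hadj, ContinuousLinearMap.adjoint_inner_right,
        ← inner_conj_symm]
    have := congrArg Complex.im h1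
    simp only [Complex.conj_im] at this
    linarith
  set F : ℝ → ℝ := fun s => ∑ j, ‖dq j θ s‖ ^ 2 with hF
  set D : ℝ → ℝ := fun s => ∑ j, 2 * (inner ℂ (dq j θ s) ((X j) (q θ s)) : ℂ).im with hDdef
  have hFnonneg : ∀ s, 0 ≤ F s := fun s => Finset.sum_nonneg fun j _ => sq_nonneg _
  have hF0 : F 0 = 0 := by
    simp [hF, hψ0]
  -- derivative of F
  have hFderiv : ∀ s, HasDerivAt F (D s) s := by
    intro s
    refine HasDerivAt.fun_sum fun j _ => ?_
    have h1 := hdSch θ s j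
    have h2 := HasDerivAt.inner ℂ h1 h1
    have h3 := Complex.reCLM.hasFDerivAt.comp_hasDerivAt s h2
    simp only [Function.comp_def] at h3
    have h4 : (fun u => Complex.reCLM ((inner ℂ (dq j θ u) (dq j θ u) : ℂ)))
        = fun u => ‖dq j θ u‖ ^ 2 := by
      funext u
      simp [inner_self_eq_norm_sq_to_K, ← Complex.ofReal_pow]
    rw [h4] at h3
    convert h3 using 1
    have him0 : (inner ℂ (dq j θ s)
        (((∑ k, ((θ k : ℂ)) • X k) + K s) (dq j θ s)) : ℂ).im = 0 :=
      him _ (hHsa s) _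
    rw [map_add]
    rw [show (inner ℂ ((-Complex.I) • ((X j) (q θ s)
        + ((∑ k, ((θ k : ℂ)) • X k) + K s) (dq j θ s))) (dq j θ s) : ℂ)
      = conj (inner ℂ (dq j θ s) ((-Complex.I) • ((X j) (q θ s)
        + ((∑ k, ((θ k : ℂ)) • X k) + K s) (dq j θ s))) : ℂ) from
      (inner_conj_symm _ _).symm]
    rw [inner_smul_right, inner_add_right]
    simp only [Complex.reCLM_apply, Complex.conj_re, Complex.mul_re,
      Complex.neg_re, Complex.I_re, Complex.neg_im, Complex.I_im,
      Complex.add_im, Complex.add_re, him0]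
    ring
  -- the spherical sum rule
  have hXsum : ∀ s : ℝ, ∑ j, ‖(X j) (q θ s)‖ ^ 2 = (m : ℝ) / d := by
    intro s
    have h1 : ∀ j : Fin m, (‖(X j) (q θ s)‖ : ℝ) ^ 2
        = ((inner ℂ (q θ s) ((X j) ((X j) (q θ s))) : ℂ)).re := by
      intro j
      have hadj : ContinuousLinearMap.adjoint (X j) = X j := by
        rw [← ContinuousLinearMap.star_eq_adjoint]; exact hX j
      have h2 := ContinuousLinearMap.adjoint_inner_right (X j) (q θ s) ((X j) (q θ s))
      rw [hadj] at h2
      rw [← inner_self_eq_norm_sq (𝕜 := ℂ), ← h2]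
      simp [RCLike.re_to_complex]
    calc ∑ j, ‖(X j) (q θ s)‖ ^ 2
        = ((inner ℂ (q θ s) ((∑ j, (X j).comp (X j)) (q θ s)) : ℂ)).re := by
          rw [ContinuousLinearMap.sum_apply, inner_sum, Complex.re_sum]
          exact Finset.sum_congr rfl fun j _ => h1 j
      _ = (((m : ℂ) / (d : ℂ)) * (inner ℂ (q θ s) (q θ s) : ℂ)).re := by
          rw [hsph]
          simp [inner_smul_right]
      _ = (m : ℝ) / d := by
          rw [inner_self_eq_norm_sq_to_K, hunit θ s]
          push_cast
          simp [← Complex.ofReal_natCast, ← Complex.ofReal_div]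
  set c : ℝ := Real.sqrt ((m : ℝ) / d) with hc
  have hcnn : 0 ≤ c := Real.sqrt_nonneg _
  have hc2 : c ^ 2 = (m : ℝ) / d :=
    Real.sq_sqrt (div_nonneg (Nat.cast_nonneg _) (Nat.cast_nonneg _))
  -- bound on D
  have hDle : ∀ s, D s ≤ 2 * c * Real.sqrt (F s) := by
    intro s
    have h1 : D s ≤ ∑ j, 2 * (‖dq j θ s‖ * ‖(X j) (q θ s)‖) := by
      refine Finset.sum_le_sum fun j _ => ?_
      have h2 : (inner ℂ (dq j θ s) ((X j) (q θ s)) : ℂ).im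
          ≤ ‖(inner ℂ (dq j θ s) ((X j) (q θ s)) : ℂ)‖ := by
        exact Complex.im_le_norm _
      have h3 := norm_inner_le_norm (𝕜 := ℂ) (dq j θ s) ((X j) (q θ s))
      linarith
    have hsum_nonneg : 0 ≤ ∑ j, ‖dq j θ s‖ * ‖(X j) (q θ s)‖ :=
      Finset.sum_nonneg fun j _ => mul_nonneg (norm_nonneg _) (norm_nonneg _)
    have hcs := Finset.sum_mul_sq_le_sq_mul_sq Finset.univ
      (fun j => ‖dq j θ s‖) (fun j => ‖(X j) (q θ s)‖)
    have h4 : (∑ j, ‖dq j θ s‖ * ‖(X j) (q θ s)‖) ^ 2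
        ≤ (Real.sqrt (F s) * c) ^ 2 := by
      rw [mul_pow, Real.sq_sqrt (hFnonneg s), hc2]
      calc (∑ j, ‖dq j θ s‖ * ‖(X j) (q θ s)‖) ^ 2
          ≤ (∑ j, ‖dq j θ s‖ ^ 2) * ∑ j, ‖(X j) (q θ s)‖ ^ 2 := hcs
        _ = F s * ((m : ℝ) / d) := by rw [hXsum s]
    have h5 : ∑ j, ‖dq j θ s‖ * ‖(X j) (q θ s)‖ ≤ Real.sqrt (F s) * c := by
      have hb : 0 ≤ Real.sqrt (F s) * c := mul_nonneg (Real.sqrt_nonneg _) hcnn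
      nlinarith
    calc D s ≤ ∑ j, 2 * (‖dq j θ s‖ * ‖(X j) (q θ s)‖) := h1
      _ = 2 * ∑ j, ‖dq j θ s‖ * ‖(X j) (q θ s)‖ := by rw [Finset.mul_sum]
      _ ≤ 2 * (Real.sqrt (F s) * c) := by linarith
      _ = 2 * c * Real.sqrt (F s) := by ring
  -- ε-regularized comparison argument
  have key : ∀ ε : ℝ, 0 < ε → Real.sqrt (F t) ≤ c * t + ε := by
    intro ε hε
    set g : ℝ → ℝ := fun s => c * s + ε - Real.sqrt (F s + ε ^ 2) with hg
    have hpos : ∀ s, 0 < F s + ε ^ 2 := fun s =>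
      add_pos_of_nonneg_of_pos (hFnonneg s) (by positivity)
    have hgd : ∀ s, HasDerivAt g (c - D s / (2 * Real.sqrt (F s + ε ^ 2))) s := by
      intro s
      have h1 : HasDerivAt (fun u => F u + ε ^ 2) (D s) s := (hFderiv s).add_const _
      have hlin : HasDerivAt (fun u : ℝ => c * u + ε) c s := by
        simpa using ((hasDerivAt_id s).const_mul c).add_const ε
      exact hlin.sub (h1.sqrt (hpos s).ne')
    have hd0 : ∀ s, 0 ≤ c - D s / (2 * Real.sqrt (F s + ε ^ 2)) := by
      intro s
      have hsp : 0 < Real.sqrt (F s + ε ^ 2) := Real.sqrt_pos.mpr (hpos s)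
      rw [sub_nonneg, div_le_iff₀ (by positivity)]
      have hmon : Real.sqrt (F s) ≤ Real.sqrt (F s + ε ^ 2) :=
        Real.sqrt_le_sqrt (by nlinarith [sq_nonneg ε])
      calc D s ≤ 2 * c * Real.sqrt (F s) := hDle s
        _ ≤ 2 * c * Real.sqrt (F s + ε ^ 2) := by nlinarith
        _ = c * (2 * Real.sqrt (F s + ε ^ 2)) := by ring
    have hmono : Monotone g := by
      refine monotone_of_deriv_nonneg (fun s => (hgd s).differentiableAt) fun s => ?_
      rw [(hgd s).deriv]; exact hd0 s
    have h0 : g 0 = 0 := by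
      simp [hg, hF0, Real.sqrt_sq hε.le]
    have hgt : (0 : ℝ) ≤ g t := h0 ▸ hmono ht
    have h2 : Real.sqrt (F t) ≤ Real.sqrt (F t + ε ^ 2) :=
      Real.sqrt_le_sqrt (by nlinarith [sq_nonneg ε])
    simp only [hg] at hgt
    linarith
  -- pass to the limit ε → 0⁺
  have hsq : Real.sqrt (F t) ≤ c * t := by
    have hlim : Tendsto (fun ε : ℝ => c * t + ε) (𝓝[>] 0) (𝓝 (c * t)) := by
      have h1 : Tendsto (fun ε : ℝ => c * t + ε) (𝓝 0) (𝓝 (c * t + 0)) :=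
        tendsto_const_nhds.add tendsto_id
      rw [add_zero] at h1
      exact h1.mono_left nhdsWithin_le_nhds
    refine ge_of_tendsto hlim ?_
    filter_upwards [self_mem_nhdsWithin] with ε hε
    exact key ε hε
  have hFt : F t ≤ (m : ℝ) / d * t ^ 2 := by
    have h1 : F t = Real.sqrt (F t) ^ 2 := (Real.sq_sqrt (hFnonneg t)).symm
    have h2 : Real.sqrt (F t) ^ 2 ≤ (c * t) ^ 2 :=
      pow_le_pow_left₀ (Real.sqrt_nonneg _) hsq 2
    rw [h1, ← hc2]
    nlinarith
  -- final assembly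
  have hgoal : ∑ j, 4 * Complex.re ((inner ℂ (dq j θ t) (dq j θ t) : ℂ)
        - (inner ℂ (dq j θ t) (q θ t) : ℂ) * (inner ℂ (q θ t) (dq j θ t) : ℂ))
      ≤ 4 * F t := by
    rw [hF, Finset.mul_sum]
    refine Finset.sum_le_sum fun j _ => ?_
    have h1 : (inner ℂ (dq j θ t) (q θ t) : ℂ)
        = conj (inner ℂ (q θ t) (dq j θ t) : ℂ) := (inner_conj_symm _ _).symm
    rw [Complex.sub_re, h1]
    have h2 : (conj (inner ℂ (q θ t) (dq j θ t) : ℂ)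
        * (inner ℂ (q θ t) (dq j θ t) : ℂ)).re
        = Complex.normSq (inner ℂ (q θ t) (dq j θ t) : ℂ) := by
      rw [mul_comm, Complex.mul_conj]
      simp
    have h3 : ((inner ℂ (dq j θ t) (dq j θ t) : ℂ)).re = ‖dq j θ t‖ ^ 2 := by
      rw [inner_self_eq_norm_sq_to_K]
      simp [← Complex.ofReal_pow]
    rw [h2, h3]
    have h4 : 0 ≤ Complex.normSq (inner ℂ (q θ t) (dq j θ t) : ℂ) :=
      Complex.normSq_nonneg _
    linarith
  have hfinal : 4 * F t ≤ 4 * m / (d : ℝ) * t ^ 2 := by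
    rw [mul_div_assoc]
    nlinarith
  linarith
end

section
/- Let X_1,…,X_m be traceless Hermitian d×d complex matrices, let τ ∈ ℝ, and for θ ∈ ℝ^m set U_θ = exp(−iτ Σ_{j=1}^m θ^j X_j) and q_θ = (U_θ ⊗ I)Φ. Then the quantum Fisher information matrix of the family θ ↦ q_θ is [J(θ)]_{jk} = (4/d) · Re Tr[(∂U_θ/∂θ^j)* (∂U_θ/∂θ^k)]. -/
open Kronecker

open scoped Matrix
open NormedSpace

section Jacobi

/-- Trace-adjugate form of the sum of determinants with one column replaced. -/
lemma sum_updateColumn_det {n : ℕ} (A B : Matrix (Fin n) (Fin n) ℂ) :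
    ∑ i, (A.updateCol i fun r => B r i).det = (A.adjugate * B).trace := by
  simp_rw [← Matrix.cramer_apply, Matrix.cramer_eq_adjugate_mulVec]
  simp [Matrix.trace, Matrix.mulVec, Matrix.mul_apply, dotProduct, Matrix.diag]

/-- Jacobi's formula, entrywise-derivative form. -/
lemma hasDerivAt_det_aux {𝕜 : Type*} [NontriviallyNormedField 𝕜] [NormedAlgebra 𝕜 ℂ]
    {n : ℕ} {M : 𝕜 → Matrix (Fin n) (Fin n) ℂ} {M' : Matrix (Fin n) (Fin n) ℂ} {x : 𝕜}
    (h : ∀ i j, HasDerivAt (fun s => M s i j) (M' i j) x) :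
    HasDerivAt (fun s => (M s).det) ((Matrix.adjugate (M x) * M').trace) x := by
  have key : HasDerivAt (fun s => (M s).det)
      (∑ σ : Equiv.Perm (Fin n), ((Equiv.Perm.sign σ : ℤ) : ℂ) *
        ∑ i, (∏ j ∈ Finset.univ.erase i, M x (σ j) j) • M' (σ i) i) x := by
    simp_rw [Matrix.det_apply']
    exact HasDerivAt.fun_sum fun σ _ =>
      (HasDerivAt.fun_finsetProd fun i _ => h (σ i) i).const_mul _
  convert key using 1
  have hupd : ∀ i : Fin n,
      ((M x).updateCol i fun r => M' r i).det
        = ∑ σ : Equiv.Perm (Fin n), ((Equiv.Perm.sign σ : ℤ) : ℂ) *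
            ((∏ j ∈ Finset.univ.erase i, M x (σ j) j) * M' (σ i) i) := by
    intro i
    rw [Matrix.det_apply']
    refine Finset.sum_congr rfl fun σ _ => ?_
    congr 1
    rw [← Finset.mul_prod_erase Finset.univ _ (Finset.mem_univ i),
      Matrix.updateCol_self, mul_comm]
    congr 1
    exact Finset.prod_congr rfl fun l hl =>
      Matrix.updateCol_ne (Finset.ne_of_mem_erase hl)
  calc (Matrix.adjugate (M x) * M').trace
      = ∑ i, ((M x).updateCol i fun r => M' r i).det :=
        (sum_updateColumn_det _ _).symm
    _ = ∑ i, ∑ σ : Equiv.Perm (Fin n), ((Equiv.Perm.sign σ : ℤ) : ℂ) *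
          ((∏ j ∈ Finset.univ.erase i, M x (σ j) j) * M' (σ i) i) := by
        simp_rw [hupd]
    _ = _ := by
        rw [Finset.sum_comm]
        exact Finset.sum_congr rfl fun σ _ => by
          rw [Finset.mul_sum]; simp [smul_eq_mul]

/-- `det (exp A) = 1` for traceless `A`. -/
lemma det_exp_eq_one {n : ℕ} (A : Matrix (Fin n) (Fin n) ℂ) (hA : A.trace = 0) :
    (exp A).det = 1 := by
  letI : NormedRing (Matrix (Fin n) (Fin n) ℂ) := Matrix.linftyOpNormedRing
  letI : NormedAlgebra ℂ (Matrix (Fin n) (Fin n) ℂ) := Matrix.linftyOpNormedAlgebra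
  have hent : ∀ (t : ℂ) (i j : Fin n), HasDerivAt (fun s : ℂ => exp (s • A) i j)
      ((exp (t • A) * A) i j) t := by
    intro t i j
    have h1 := hasDerivAt_exp_smul_const (𝕂 := ℂ) A t
    have h2 := ((Matrix.entryLinearMap ℂ ℂ i j).toContinuousLinearMap.hasFDerivAt).comp_hasDerivAt
      t h1
    exact h2
  have hder : ∀ t : ℂ, HasDerivAt (fun s : ℂ => (exp (s • A)).det) 0 t := by
    intro t
    have h := hasDerivAt_det_aux (hent t)
    have hz : ((exp (t • A)).adjugate * (exp (t • A) * A)).trace = 0 := by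
      rw [← Matrix.mul_assoc, Matrix.adjugate_mul, Matrix.smul_mul, Matrix.one_mul,
        Matrix.trace_smul, hA, smul_zero]
    rwa [hz] at h
  have hconst := is_const_of_deriv_eq_zero (𝕜 := ℂ)
    (fun t => (hder t).differentiableAt) (fun t => (hder t).deriv) 1 0
  simpa using hconst

end Jacobi

attribute [local instance] Matrix.normedAddCommGroup Matrix.normedSpace

/-- The maximally entangled state `Φ = d^{-1/2} ∑ⱼ eⱼ ⊗ eⱼ ∈ ℂ^d ⊗ ℂ^d`. -/
noncomputable def mes (d : ℕ) : EuclideanSpace ℂ (Fin d × Fin d) :=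
  ((Real.sqrt d : ℂ))⁻¹ • ∑ j : Fin d, EuclideanSpace.single (j, j) (1 : ℂ)

/-- The probe state `(M ⊗ I)Φ` obtained by applying `M` to one half of the
maximally entangled state. -/
noncomputable def probe {d : ℕ} (M : Matrix (Fin d) (Fin d) ℂ) :
    EuclideanSpace ℂ (Fin d × Fin d) :=
  Matrix.toEuclideanLin (M ⊗ₖ (1 : Matrix (Fin d) (Fin d) ℂ)) (mes d)

lemma mes_apply (d : ℕ) (q : Fin d × Fin d) :
    mes d q = if q.1 = q.2 then ((Real.sqrt d : ℂ))⁻¹ else 0 := by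
  obtain ⟨a, b⟩ := q
  have hsum : (∑ j : Fin d, EuclideanSpace.single ((j : Fin d), j) (1 : ℂ)) (a, b)
      = ∑ j : Fin d, (EuclideanSpace.single ((j : Fin d), j) (1 : ℂ)) (a, b) :=
    by rw [WithLp.ofLp_sum, Finset.sum_apply]
  simp only [mes, PiLp.smul_apply, smul_eq_mul, hsum, EuclideanSpace.single_apply,
    Prod.mk.injEq]
  by_cases h : a = b
  · subst h
    rw [Finset.sum_eq_single a (fun c _ hc => by simp [Ne.symm hc]) (by simp)]
    simp
  · rw [Finset.sum_eq_zero, mul_zero, if_neg h]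
    intro c _
    simp only [ite_eq_right_iff, and_imp]
    intro h1 h2
    exact absurd (h1.trans h2.symm) h
lemma probe_apply {d : ℕ} (M : Matrix (Fin d) (Fin d) ℂ) (p : Fin d × Fin d) :
    probe M p = ((Real.sqrt d : ℂ))⁻¹ * M p.1 p.2 := by
  obtain ⟨a, b⟩ := p
  simp only [probe, Matrix.toEuclideanLin_apply]
  show ((M ⊗ₖ (1 : Matrix (Fin d) (Fin d) ℂ)).mulVec fun q => mes d q) (a, b) = _
  simp only [Matrix.mulVec, dotProduct, Matrix.kroneckerMap_apply, Matrix.one_apply,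
    mes_apply]
  rw [Fintype.sum_prod_type]
  simp only [mul_ite, ite_mul, mul_zero, zero_mul, mul_one, one_mul,
    Finset.sum_ite_eq, Finset.sum_ite_eq', Finset.mem_univ, if_true]
  simp [mul_comm]
lemma inner_probe {d : ℕ} (A B : Matrix (Fin d) (Fin d) ℂ) :
    (inner ℂ (probe A) (probe B) : ℂ) = ((d : ℂ))⁻¹ * (A.conjTranspose * B).trace := by
  have hsq : ((Real.sqrt d : ℂ))⁻¹ * ((Real.sqrt d : ℂ))⁻¹ = ((d : ℂ))⁻¹ := by
    rw [← mul_inv, ← Complex.ofReal_mul, Real.mul_self_sqrt (Nat.cast_nonneg d)]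
    norm_num
  rw [PiLp.inner_apply]
  simp only [RCLike.inner_apply, probe_apply, map_mul, map_inv₀, Complex.conj_ofReal]
  rw [Fintype.sum_prod_type]
  simp only [Matrix.trace, Matrix.diag, Matrix.mul_apply, Matrix.conjTranspose_apply,
    Finset.mul_sum, RCLike.star_def]
  rw [Finset.sum_comm]
  refine Finset.sum_congr rfl fun a _ => Finset.sum_congr rfl fun b _ => ?_
  rw [← hsq]
  ring
lemma hasDerivAt_entry {n : ℕ} {F : ℝ → Matrix (Fin n) (Fin n) ℂ}
    {F' : Matrix (Fin n) (Fin n) ℂ} {x : ℝ} (h : HasDerivAt F F' x) (i j : Fin n) :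
    HasDerivAt (fun s => F s i j) (F' i j) x := by
  have h2 := (((Matrix.entryLinearMap ℂ ℂ i j).toContinuousLinearMap.restrictScalars
    ℝ).hasFDerivAt).comp_hasDerivAt x h
  exact h2

/-- For traceless Hermitian matrices `X₁,…,X_m`, with
`U_θ = exp(-iτ H_θ)`, probe states `q_θ = (U_θ ⊗ I)Φ` and partial derivatives
`∂ⱼ q_θ = ((∂ⱼ U_θ) ⊗ I)Φ`, the quantum Fisher information matrix of the family
`θ ↦ q_θ` is `[J(θ)]ⱼₖ = (4/d) Re Tr[(∂ⱼU_θ)ᴴ (∂ₖU_θ)]`. -/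
theorem qfi_mes_eq_haar_metric
    (m d : ℕ) (hd : 0 < d) (τ : ℝ)
    (X : Fin m → Matrix (Fin d) (Fin d) ℂ)
    (hherm : ∀ j, (X j).IsHermitian)
    (htraceless : ∀ j, (X j).trace = 0)
    -- `U θ = exp(-iτ H_θ)` with `H_θ = ∑ j, θ j • X j`
    (U : (Fin m → ℝ) → Matrix (Fin d) (Fin d) ℂ)
    (hU : ∀ θ, U θ = NormedSpace.exp
      ((-(Complex.I * (τ : ℂ))) • ∑ j, (θ j : ℂ) • X j))
    -- `dU j θ` is the partial derivative `∂U_θ/∂θ^j`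
    (dU : Fin m → (Fin m → ℝ) → Matrix (Fin d) (Fin d) ℂ)
    (hdU : ∀ θ j, HasDerivAt (fun s : ℝ => U (Function.update θ j s)) (dU j θ) (θ j))
    (θ : Fin m → ℝ) (j k : Fin m) :
    4 * Complex.re
        ((inner ℂ (probe (dU j θ)) (probe (dU k θ)) : ℂ)
          - (inner ℂ (probe (dU j θ)) (probe (U θ)) : ℂ)
            * (inner ℂ (probe (U θ)) (probe (dU k θ)) : ℂ))
      = (4 / (d : ℝ)) * Complex.re ((dU j θ).conjTranspose * dU k θ).trace := by
  -- the generator is traceless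
  have htr : ∀ θ' : Fin m → ℝ,
      ((-(Complex.I * (τ : ℂ))) • ∑ l, ((θ' l : ℝ) : ℂ) • X l).trace = 0 := by
    intro θ'
    rw [Matrix.trace_smul, Matrix.trace_sum]
    simp [Matrix.trace_smul, htraceless]
  -- `det U = 1` everywhere
  have hdet : ∀ θ' : Fin m → ℝ, (U θ').det = 1 := fun θ' => by
    rw [hU]; exact det_exp_eq_one _ (htr θ')
  -- Jacobi + constancy of the determinant gives `Tr(adj(Uθ) ⬝ ∂ₗU) = 0`
  have hkey : ∀ l : Fin m, ((U θ).adjugate * dU l θ).trace = 0 := by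
    intro l
    have hjac := hasDerivAt_det_aux (fun i i' => hasDerivAt_entry (hdU θ l) i i')
    rw [Function.update_eq_self] at hjac
    have hconst : HasDerivAt (fun s : ℝ => (U (Function.update θ l s)).det) 0 (θ l) := by
      have hfun : (fun s : ℝ => (U (Function.update θ l s)).det) = fun _ => (1 : ℂ) :=
        funext fun s => hdet _
      rw [hfun]; exact hasDerivAt_const _ _
    exact (hconst.unique hjac).symm
  -- unitarity: `Uᴴ U = 1`
  set A : Matrix (Fin d) (Fin d) ℂ :=
    (-(Complex.I * (τ : ℂ))) • ∑ l, ((θ l : ℝ) : ℂ) • X l with hA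
  have hstar : star A = -A := by
    rw [hA, star_smul, star_sum]
    have hsum : ∀ l : Fin m, star (((θ l : ℝ) : ℂ) • X l) = ((θ l : ℝ) : ℂ) • X l := by
      intro l
      rw [star_smul, Matrix.star_eq_conjTranspose, (hherm l).eq]
      simp [Complex.conj_ofReal]
    simp only [hsum]
    rw [← neg_smul]
    congr 1
    simp [Complex.ext_iff]
  have hUU : (U θ).conjTranspose * U θ = 1 := by
    rw [hU θ, ← Matrix.exp_conjTranspose, ← Matrix.star_eq_conjTranspose, hstar,
      ← Matrix.exp_add_of_commute (-A) A ((Commute.refl A).neg_left), neg_add_cancel,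
      exp_zero]
  -- `adjugate (Uθ) = (Uθ)ᴴ`
  have hadj : (U θ).adjugate = (U θ).conjTranspose := by
    have h1 : (U θ).adjugate * U θ = 1 := by
      rw [Matrix.adjugate_mul, hdet θ, one_smul]
    have h2 : U θ * (U θ).conjTranspose = 1 := mul_eq_one_comm.mp hUU
    calc (U θ).adjugate = (U θ).adjugate * (U θ * (U θ).conjTranspose) := by
          rw [h2, Matrix.mul_one]
      _ = ((U θ).adjugate * U θ) * (U θ).conjTranspose := by rw [Matrix.mul_assoc]
      _ = (U θ).conjTranspose := by rw [h1, Matrix.one_mul]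
  have hUdU : ∀ l : Fin m, ((U θ).conjTranspose * dU l θ).trace = 0 := by
    intro l; rw [← hadj]; exact hkey l
  have hdUU : ((dU j θ).conjTranspose * U θ).trace = 0 := by
    have : (dU j θ).conjTranspose * U θ
        = ((U θ).conjTranspose * dU j θ).conjTranspose := by
      rw [Matrix.conjTranspose_mul, Matrix.conjTranspose_conjTranspose]
    rw [this, Matrix.trace_conjTranspose, hUdU j, star_zero]
  rw [inner_probe, inner_probe, inner_probe, hUdU k, hdUU]
  simp only [mul_zero, zero_mul, sub_zero]
  have hcast : ((d : ℂ))⁻¹ = (((d : ℝ))⁻¹ : ℂ) := by push_cast; ring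
  rw [hcast]
  rw [show ((((d : ℝ))⁻¹ : ℂ) * ((dU j θ).conjTranspose * dU k θ).trace).re
      = ((d : ℝ))⁻¹ * (((dU j θ).conjTranspose * dU k θ).trace).re by
    simp [Complex.mul_re]]
  rw [div_eq_mul_inv]
  ring
end

section
/- Let E be a complex inner product space, P an orthogonal projection on E, and q, q' unit vectors with Pq ≠ 0 and Pq' ≠ 0. Set q̄ = Pq/‖Pq‖ and q̄' = Pq'/‖Pq'‖. Then 1 − |⟨q̄, q̄'⟩|² ≥ ⟨q, Pq⟩·⟨q', Pq'⟩ − |⟨q, Pq'⟩|². -/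
/-- Let `P` be an orthogonal projection on a complex inner
product space, and `q, q'` unit vectors with `Pq ≠ 0`, `Pq' ≠ 0`.  With the
normalized postselected states `q̄ = Pq/‖Pq‖`, `q̄' = Pq'/‖Pq'‖`, one has
`1 − |⟨q̄, q̄'⟩|² ≥ ⟨q, Pq⟩⟨q', Pq'⟩ − |⟨q, Pq'⟩|²`. -/
theorem postselected_infidelity_lower_bound
    {E : Type*} [NormedAddCommGroup E] [InnerProductSpace ℂ E]
    (P : E →L[ℂ] E)
    (hidem : P.comp P = P)
    (hsa : ∀ x y : E, (inner ℂ (P x) y : ℂ) = inner ℂ x (P y))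
    (q q' : E) (hq : ‖q‖ = 1) (hq' : ‖q'‖ = 1)
    (hPq : P q ≠ 0) (hPq' : P q' ≠ 0) :
    Complex.re (inner ℂ q (P q)) * Complex.re (inner ℂ q' (P q'))
        - ‖(inner ℂ q (P q') : ℂ)‖ ^ 2
      ≤ 1 - ‖(inner ℂ (‖P q‖⁻¹ • P q) (‖P q'‖⁻¹ • P q') : ℂ)‖ ^ 2 := by
  have hPP : ∀ x : E, P (P x) = P x := fun x => DFunLike.congr_fun hidem x
  have hself : ∀ x : E, (inner ℂ x (P x) : ℂ) = ((‖P x‖ : ℂ))^2 := by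
    intro x
    calc (inner ℂ x (P x) : ℂ) = inner ℂ x (P (P x)) := by rw [hPP]
      _ = inner ℂ (P x) (P x) := (hsa x (P x)).symm
      _ = ((‖P x‖ : ℂ))^2 := by
            rw [inner_self_eq_norm_sq_to_K]; norm_cast
  have h2 : (inner ℂ q (P q') : ℂ) = inner ℂ (P q) (P q') := by
    calc (inner ℂ q (P q') : ℂ) = inner ℂ q (P (P q')) := by rw [hPP]
      _ = inner ℂ (P q) (P q') := (hsa q (P q')).symm
  set a := ‖P q‖ with ha
  set b := ‖P q'‖ with hb
  set c := ‖(inner ℂ (P q) (P q') : ℂ)‖ with hc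
  have hare : Complex.re (inner ℂ q (P q)) = a^2 := by
    rw [hself q, ← Complex.ofReal_pow, Complex.ofReal_re]
  have hbre : Complex.re (inner ℂ q' (P q')) = b^2 := by
    rw [hself q', ← Complex.ofReal_pow, Complex.ofReal_re]
  have ha0 : 0 < a := norm_pos_iff.mpr hPq
  have hb0 : 0 < b := norm_pos_iff.mpr hPq'
  have ha1 : a ≤ 1 := by
    have hcs : ‖(inner ℂ q (P q) : ℂ)‖ ≤ ‖q‖ * ‖P q‖ := norm_inner_le_norm q (P q)
    have : ‖(inner ℂ q (P q) : ℂ)‖ = a^2 := by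
      rw [hself q]; rw [← Complex.ofReal_pow, Complex.norm_real]
      exact abs_of_nonneg (by positivity)
    nlinarith
  have hb1 : b ≤ 1 := by
    have hcs : ‖(inner ℂ q' (P q') : ℂ)‖ ≤ ‖q'‖ * ‖P q'‖ := norm_inner_le_norm q' (P q')
    have : ‖(inner ℂ q' (P q') : ℂ)‖ = b^2 := by
      rw [hself q']; rw [← Complex.ofReal_pow, Complex.norm_real]
      exact abs_of_nonneg (by positivity)
    nlinarith
  have hcab : c ≤ a * b := norm_inner_le_norm (P q) (P q')
  have hnorm : ‖(inner ℂ (a⁻¹ • P q) (b⁻¹ • P q') : ℂ)‖ = a⁻¹ * b⁻¹ * c := by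
    have hs : ∀ (r : ℝ) (x : E), r • x = (r : ℂ) • x := fun r x => by
      rw [← algebraMap_smul ℂ r x]; norm_num
    rw [hs, hs, inner_smul_left, inner_smul_right]
    simp only [norm_mul, RingHomIsometric.norm_map, Complex.norm_real, norm_inv,
      Real.norm_eq_abs, abs_of_nonneg (le_of_lt ha0), abs_of_nonneg (le_of_lt hb0)]
    ring
  rw [hare, hbre, h2, hnorm]
  have hc0 : 0 ≤ c := norm_nonneg _
  have key : a^2 * b^2 - c^2 ≤ 1 - (a⁻¹ * b⁻¹ * c)^2 := by
    have h1 : (a⁻¹ * b⁻¹ * c)^2 = c^2 / (a^2 * b^2) := by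
      have hd : a⁻¹ * b⁻¹ * c = c / (a * b) := by ring
      rw [hd, div_pow, mul_pow]
    have hs : c^2 ≤ a^2 * b^2 := by nlinarith
    have ha2 : a^2 ≤ 1 := by nlinarith
    have hb2 : b^2 ≤ 1 := by nlinarith
    have ht : a^2 * b^2 ≤ 1 := by
      nlinarith [mul_nonneg (sub_nonneg.mpr ha2) (sub_nonneg.mpr hb2)]
    have he : 1 - c^2/(a^2*b^2) = (a^2*b^2 - c^2)/(a^2*b^2) := by field_simp
    rw [h1, he, le_div_iff₀ (by positivity)]
    nlinarith [mul_nonneg (sub_nonneg.mpr hs) (sub_nonneg.mpr ht)]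
  exact key
end
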